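/- arXiv:2107.10323 — 2 statements merged into one kernel-verified Lean document; each statement's English description precedes it below -/
import Mathlib

section
/- Theorem 3, counterexamples without monotonicity: Let d = 2, n = 4, θ_1 = (1,1), θ_2 = (1,3), θ_3 = (3,3), θ_4 = (4,1), and let f be any probability vector with positive entries. (a) The allocation of the separate pricing mechanism at p = (2,2) is not totally ordered in the componentwise order (it assigns q_2 = (0,1) and q_4 = (1,0), which are incomparable), so it is not an upgrade pricing mechanism. (b) The mechanism with q_1 = (0,0), t_1 = 0; q_2 = (0,1), t_2 = 2; q_3 = (1,1), t_3 = 4; q_4 = (1,1), t_4 = 4 (and (q_0,t_0) = (0,0)) is an IC-IR upgrade pricing mechanism, yet there is no p ∈ ℝ^2 such that for every i ∈ {1,…,4}, t_i = Σ_{k=1}^2 p_k q_i^k and ⟨q_i, θ_i⟩ − Σ_k p_k q_i^k ≥ ⟨s, θ_i⟩ − Σ_k p_k s^k for all s ∈ {0,1}^2. -/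
open Finset

noncomputable section

/-! Common setup: a multiproduct monopoly with `d` goods (indexed `1,…,d`) and `n` buyer
types (indexed `1,…,n`, with `0` the outside option).  All vectors over goods/types are
encoded as functions `ℕ → ℝ`. -/

/-- Inner product `⟨x, y⟩ = ∑_{k=1}^d x_k y_k` over the goods `1,…,d`. -/
def dot (d : ℕ) (x y : ℕ → ℝ) : ℝ := ∑ k ∈ Finset.Icc 1 d, x k * y k

/-- `f` is a probability vector on types `1,…,n`. -/
def IsProb (n : ℕ) (f : ℕ → ℝ) : Prop :=
  (∀ i ∈ Finset.Icc 1 n, 0 < f i) ∧ ∑ i ∈ Finset.Icc 1 n, f i = 1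

/-- Cumulative distribution `F_i = ∑_{j=1}^i f_j` (so `F_0 = 0`). -/
def Fc (f : ℕ → ℝ) (i : ℕ) : ℝ := ∑ j ∈ Finset.Icc 1 i, f j

/-- `(q,t)` is a mechanism: `(q_0,t_0) = (0,0)` and `q_i ∈ [0,1]^d` for `i ∈ {1,…,n}`. -/
def IsMechanism (d n : ℕ) (q : ℕ → ℕ → ℝ) (t : ℕ → ℝ) : Prop :=
  (∀ k ∈ Finset.Icc 1 d, q 0 k = 0) ∧ t 0 = 0 ∧
    ∀ i ∈ Finset.Icc 1 n, ∀ k ∈ Finset.Icc 1 d, 0 ≤ q i k ∧ q i k ≤ 1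

/-- Incentive compatibility and individual rationality:
`⟨q_j, θ_j⟩ − t_j ≥ ⟨q_i, θ_j⟩ − t_i` for all `j ∈ {1,…,n}`, `i ∈ {0,…,n}`. -/
def ICIR (d n : ℕ) (θ : ℕ → ℕ → ℝ) (q : ℕ → ℕ → ℝ) (t : ℕ → ℝ) : Prop :=
  ∀ j ∈ Finset.Icc 1 n, ∀ i ∈ Finset.Icc 0 n,
    dot d (q j) (θ j) - t j ≥ dot d (q i) (θ j) - t i

/-- Expected revenue `∑_{i=1}^n f_i t_i`. -/
def revenue (n : ℕ) (f t : ℕ → ℝ) : ℝ := ∑ i ∈ Finset.Icc 1 n, f i * t i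

/-- A mechanism is optimal if it is an IC-IR mechanism whose revenue is at least that of
every IC-IR mechanism. -/
def Optimal (d n : ℕ) (θ : ℕ → ℕ → ℝ) (f : ℕ → ℝ) (q : ℕ → ℕ → ℝ) (t : ℕ → ℝ) : Prop :=
  IsMechanism d n q t ∧ ICIR d n θ q t ∧
    ∀ q' : ℕ → ℕ → ℝ, ∀ t' : ℕ → ℝ, IsMechanism d n q' t' → ICIR d n θ q' t' →
      revenue n f t' ≤ revenue n f t

/-- Upgrade pricing: `{q_0, q_1, …, q_n}` is totally ordered in the componentwise order. -/
def UpgradePricing (d n : ℕ) (q : ℕ → ℕ → ℝ) : Prop :=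
  ∀ i ∈ Finset.Icc 0 n, ∀ j ∈ Finset.Icc 0 n,
    (∀ k ∈ Finset.Icc 1 d, q i k ≤ q j k) ∨ (∀ k ∈ Finset.Icc 1 d, q j k ≤ q i k)

/-- `k`-th coordinate of the virtual value of type `i` under multipliers `lam`:
`φ_i^λ = θ_i − (1/f_i) ∑_{j=1}^n λ_{ji} (θ_j − θ_i)`. -/
def virt (n : ℕ) (θ : ℕ → ℕ → ℝ) (f : ℕ → ℝ) (lam : ℕ → ℕ → ℝ) (i k : ℕ) : ℝ :=
  θ i k - (1 / f i) * ∑ j ∈ Finset.Icc 1 n, lam j i * (θ j k - θ i k)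

/-- Nonnegativity of the multipliers `λ_{ji}`, `j ∈ {1,…,n}`, `i ∈ {0,…,n}`. -/
def NonnegLam (n : ℕ) (lam : ℕ → ℕ → ℝ) : Prop :=
  ∀ j ∈ Finset.Icc 1 n, ∀ i ∈ Finset.Icc 0 n, 0 ≤ lam j i

/-- Flow conservation: `f_i = ∑_{j=0}^n λ_{ij} − ∑_{j=1}^n λ_{ji}` for all `i ∈ {1,…,n}`. -/
def FlowConservation (n : ℕ) (f : ℕ → ℝ) (lam : ℕ → ℕ → ℝ) : Prop :=
  ∀ i ∈ Finset.Icc 1 n,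
    f i = ∑ j ∈ Finset.Icc 0 n, lam i j - ∑ j ∈ Finset.Icc 1 n, lam j i

/-- A flow is downward if `λ_{ji} > 0` with `j, i ∈ {1,…,n}` implies `j > i`. -/
def Downward (n : ℕ) (lam : ℕ → ℕ → ℝ) : Prop :=
  ∀ j ∈ Finset.Icc 1 n, ∀ i ∈ Finset.Icc 1 n, 0 < lam j i → i < j

/-- `q'` is a feasible allocation: `q'_i ∈ [0,1]^d` for `i ∈ {1,…,n}`. -/
def InUnitCube (d n : ℕ) (q : ℕ → ℕ → ℝ) : Prop :=
  ∀ i ∈ Finset.Icc 1 n, ∀ k ∈ Finset.Icc 1 d, 0 ≤ q i k ∧ q i k ≤ 1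

/-- Virtual welfare `∑_{i=1}^n f_i ⟨q_i, φ_i⟩` of an allocation `q` for virtual values `phi`. -/
def vw (d n : ℕ) (f : ℕ → ℝ) (phi : ℕ → ℕ → ℝ) (q : ℕ → ℕ → ℝ) : ℝ :=
  ∑ i ∈ Finset.Icc 1 n, f i * ∑ k ∈ Finset.Icc 1 d, q i k * phi i k

/-- Initial (Myersonian) virtual values: `φ_i = θ_i − ((1 − F_i)/f_i)(θ_{i+1} − θ_i)` for
`i < n`, and `φ_n = θ_n`. -/
def initVirt (n : ℕ) (θ : ℕ → ℕ → ℝ) (f : ℕ → ℝ) (i k : ℕ) : ℝ :=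
  if i < n then θ i k - ((1 - Fc f i) / f i) * (θ (i + 1) k - θ i k) else θ i k

/-- Pseudo-revenues `R_i^k = (1 − F_{i−1}) θ_i^k` for `i ∈ {1,…,n}`, with `R_{n+1}^k = 0`. -/
def pseudoRev (n : ℕ) (θ : ℕ → ℕ → ℝ) (f : ℕ → ℝ) (i k : ℕ) : ℝ :=
  if i ≤ n then (1 - Fc f (i - 1)) * θ i k else 0

/-- The cutoff allocation: `q_i^k = 1` iff `i ≥ i^k`. -/
def cutAlloc (cut : ℕ → ℕ) : ℕ → ℕ → ℝ := fun i k => if cut k ≤ i then 1 else 0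

/-- The instance is weakly monotone w.r.t. cutoffs `cut`:
`θ_i^k ≤ θ_j^k` whenever `i ≤ i^k ≤ j`. -/
def WeaklyMonotone (d n : ℕ) (θ : ℕ → ℕ → ℝ) (cut : ℕ → ℕ) : Prop :=
  ∀ k ∈ Finset.Icc 1 d, ∀ i ∈ Finset.Icc 1 n, ∀ j ∈ Finset.Icc 1 n,
    i ≤ cut k → cut k ≤ j → θ i k ≤ θ j k

/-- The instance is regular w.r.t. cutoffs `cut`:
`φ_i^k ≤ 0 ≤ φ_j^k` whenever `i ≤ i^k ≤ j`. -/
def Regular (d n : ℕ) (θ : ℕ → ℕ → ℝ) (f : ℕ → ℝ) (cut : ℕ → ℕ) : Prop :=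
  ∀ k ∈ Finset.Icc 1 d, ∀ i ∈ Finset.Icc 1 n, ∀ j ∈ Finset.Icc 1 n,
    i ≤ cut k → cut k ≤ j → initVirt n θ f i k ≤ 0 ∧ 0 ≤ initVirt n θ f j k

/-- Monotone types: `θ_i^k ≤ θ_j^k` for all `i ≤ j` and all goods `k`. -/
def MonotoneTypes (d n : ℕ) (θ : ℕ → ℕ → ℝ) : Prop :=
  ∀ i ∈ Finset.Icc 1 n, ∀ j ∈ Finset.Icc 1 n, i ≤ j → ∀ k ∈ Finset.Icc 1 d, θ i k ≤ θ j k

/-- Monotone marginal rates of substitution: all values are positive and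
`θ_i^l / θ_i^k ≤ θ_j^l / θ_j^k` whenever `i ≤ j` and `k ≤ l`. -/
def MonotoneMRS (d n : ℕ) (θ : ℕ → ℕ → ℝ) : Prop :=
  (∀ i ∈ Finset.Icc 1 n, ∀ k ∈ Finset.Icc 1 d, 0 < θ i k) ∧
    ∀ i ∈ Finset.Icc 1 n, ∀ j ∈ Finset.Icc 1 n, i ≤ j →
      ∀ k ∈ Finset.Icc 1 d, ∀ l ∈ Finset.Icc 1 d, k ≤ l →
        θ i l / θ i k ≤ θ j l / θ j k

/-- The initial flow `λ̂_{ji} = 1 − F_i` if `j = i + 1`, and `0` otherwise. -/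
def lamHat (f : ℕ → ℝ) : ℕ → ℕ → ℝ := fun j i => if j = i + 1 then 1 - Fc f i else 0

/-- Extended cutoffs: `i^0 = 1` and `i^{d+1} = n`. -/
def extCut (n d : ℕ) (cut : ℕ → ℕ) (k : ℕ) : ℕ :=
  if k = 0 then 1 else if k ≤ d then cut k else n

/-- The ironing update `λ'(γ)` of `lam` at type `i`:
`λ'_{ji} = γ λ_{ji}` and `λ'_{j(i−1)} = λ_{j(i−1)} + (1−γ) λ_{ji}` for `j > i`;
`λ'_{i(i−1)} = λ_{i(i−1)} − (1−γ) ∑_{j=i+1}^n λ_{ji}`; other entries unchanged. -/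
def ironUpdate (n : ℕ) (lam : ℕ → ℕ → ℝ) (i : ℕ) (γ : ℝ) : ℕ → ℕ → ℝ :=
  fun j r =>
    if i < j ∧ r = i then γ * lam j i
    else if i < j ∧ r = i - 1 then lam j (i - 1) + (1 - γ) * lam j i
    else if j = i ∧ r = i - 1 then
      lam i (i - 1) - (1 - γ) * ∑ j' ∈ Finset.Icc (i + 1) n, lam j' i
    else lam j r

/-- Pseudo-revenue associated to a flow: `R_i^{λ,k} = ∑_{j=i}^n f_j φ_j^{λ,k}`
(so `R_{n+1}^{λ,k} = 0`). -/
def flowRev (n : ℕ) (θ : ℕ → ℕ → ℝ) (f : ℕ → ℝ) (lam : ℕ → ℕ → ℝ) (i k : ℕ) : ℝ :=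
  ∑ j ∈ Finset.Icc i n, f j * virt n θ f lam j k

/-- A finite sequence `(R_i)_{i=1}^n` is quasi-concave: for some `i' ∈ {1,…,n}`,
`R_i ≥ R_j` whenever `i' ≤ i ≤ j` or `j ≤ i ≤ i'` (indices in `{1,…,n}`). -/
def QuasiConcaveSeq (n : ℕ) (R : ℕ → ℝ) : Prop :=
  ∃ i' ∈ Finset.Icc 1 n, ∀ i ∈ Finset.Icc 1 n, ∀ j ∈ Finset.Icc 1 n,
    ((i' ≤ i ∧ i ≤ j) ∨ (j ≤ i ∧ i ≤ i')) → R j ≤ R i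

/-- `Rbar` is the quasi-concave closure of `R` on `{1,…,n}`: the pointwise smallest
quasi-concave sequence dominating `R`. -/
def IsQCClosure (n : ℕ) (R Rbar : ℕ → ℝ) : Prop :=
  QuasiConcaveSeq n Rbar ∧ (∀ i ∈ Finset.Icc 1 n, R i ≤ Rbar i) ∧
    ∀ S : ℕ → ℝ, QuasiConcaveSeq n S → (∀ i ∈ Finset.Icc 1 n, R i ≤ S i) →
      ∀ i ∈ Finset.Icc 1 n, Rbar i ≤ S i

/-- `{a,…,b}` is a candidate ironing interval for the sequence `R` with closure `Rbar`:
an inclusion-maximal contiguous set of indices where `Rbar ≠ R`. -/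
def CandInterval (n : ℕ) (R Rbar : ℕ → ℝ) (a b : ℕ) : Prop :=
  1 ≤ a ∧ a ≤ b ∧ b ≤ n ∧ (∀ i, a ≤ i → i ≤ b → Rbar i ≠ R i) ∧
    (a = 1 ∨ Rbar (a - 1) = R (a - 1)) ∧ (b = n ∨ Rbar (b + 1) = R (b + 1))

/-- The instance is mostly regular w.r.t. cutoffs `cut`, where `Rbar · k` is the
quasi-concave closure of the pseudo-revenues of item `k`:
(1) no partial overlap of candidate ironing intervals of neighboring items;
(2) no candidate ironing interval contains a neighboring cutoff;
(3) not-too-shuffled values on candidate ironing intervals between cutoffs. -/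
def MostlyRegular (d n : ℕ) (θ : ℕ → ℕ → ℝ) (f : ℕ → ℝ) (cut : ℕ → ℕ)
    (Rbar : ℕ → ℕ → ℝ) : Prop :=
  ∀ k, 1 ≤ k → k + 1 ≤ d →
    (∀ a b c e,
      CandInterval n (fun i => pseudoRev n θ f i k) (fun i => Rbar i k) a b →
      CandInterval n (fun i => pseudoRev n θ f i (k + 1)) (fun i => Rbar i (k + 1)) c e →
      (b + 1 < c ∨ e + 1 < a ∨ (c < a ∧ b < e) ∨ (a < c ∧ e < b))) ∧
    (∀ a b,
      (CandInterval n (fun i => pseudoRev n θ f i k) (fun i => Rbar i k) a b ∨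
        CandInterval n (fun i => pseudoRev n θ f i (k + 1)) (fun i => Rbar i (k + 1)) a b) →
      ¬(a ≤ cut k ∧ cut k ≤ b) ∧ ¬(a ≤ cut (k + 1) ∧ cut (k + 1) ≤ b)) ∧
    (∀ a b,
      (CandInterval n (fun i => pseudoRev n θ f i k) (fun i => Rbar i k) a b ∨
        CandInterval n (fun i => pseudoRev n θ f i (k + 1)) (fun i => Rbar i (k + 1)) a b) →
      cut k + 1 ≤ a → b + 1 ≤ cut (k + 1) →
      ∀ i, a ≤ i → i ≤ b → θ a (k + 1) ≤ θ i (k + 1) ∧ θ b k ≤ θ (b + 1) k)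

/-- Allocation of the separate pricing mechanism at prices `p`:
`q_i^k = 1` iff `θ_i^k ≥ p_k` (and `q_0 = 0`). -/
def sepQ (θ : ℕ → ℕ → ℝ) (p : ℕ → ℝ) : ℕ → ℕ → ℝ :=
  fun i k => if i = 0 then 0 else if p k ≤ θ i k then 1 else 0

/-- Transfers of the separate pricing mechanism at prices `p`: `t_i = ∑_{k=1}^d p_k q_i^k`. -/
def sepT (d : ℕ) (θ : ℕ → ℕ → ℝ) (p : ℕ → ℝ) : ℕ → ℝ :=
  fun i => ∑ k ∈ Finset.Icc 1 d, p k * sepQ θ p i k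

/-- The type space of the counterexample: `θ_1 = (1,1)`, `θ_2 = (1,3)`, `θ_3 = (3,3)`,
`θ_4 = (4,1)`. -/
def θex : ℕ → ℕ → ℝ := fun i k =>
  if i = 1 then 1
  else if i = 2 then (if k = 1 then 1 else 3)
  else if i = 3 then 3
  else if i = 4 then (if k = 1 then 4 else 1)
  else 0

/-- The separate prices `p = (2,2)`. -/
def pex : ℕ → ℝ := fun _ => 2

/-- Allocation of the upgrade pricing counterexample:
`q_1 = (0,0)`, `q_2 = (0,1)`, `q_3 = q_4 = (1,1)` (and `q_0 = 0`). -/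
def qex : ℕ → ℕ → ℝ := fun i k =>
  if i = 2 then (if k = 1 then 0 else 1)
  else if i = 3 ∨ i = 4 then 1
  else 0

/-- Transfers of the upgrade pricing counterexample: `t_2 = 2`, `t_3 = t_4 = 4`. -/
def tex : ℕ → ℝ := fun i => if i = 2 then 2 else if i = 3 ∨ i = 4 then 4 else 0

def ImplementedBySeparatePrices (d n : ℕ) (θ q : ℕ → ℕ → ℝ) (t p : ℕ → ℝ) : Prop :=
  ∀ i ∈ Finset.Icc 1 n,
    t i = (∑ k ∈ Finset.Icc 1 d, p k * q i k) ∧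
    ∀ s : ℕ → ℝ, (∀ k ∈ Finset.Icc 1 d, s k = 0 ∨ s k = 1) →
      dot d s (θ i) - (∑ k ∈ Finset.Icc 1 d, p k * s k) ≤
        dot d (q i) (θ i) - (∑ k ∈ Finset.Icc 1 d, p k * q i k)

lemma sum_Icc_one_two (g : ℕ → ℝ) : ∑ k ∈ Finset.Icc 1 2, g k = g 1 + g 2 := by
  rw [show Finset.Icc 1 2 = ({1, 2} : Finset ℕ) from rfl, Finset.sum_pair (by norm_num)]

lemma dot_two (x y : ℕ → ℝ) : dot 2 x y = x 1 * y 1 + x 2 * y 2 :=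
  sum_Icc_one_two _

lemma not_upgradePricing_of_incomparable {d n : ℕ} {q : ℕ → ℕ → ℝ} {i j k l : ℕ}
    (hi : i ∈ Finset.Icc 0 n) (hj : j ∈ Finset.Icc 0 n)
    (hk : k ∈ Finset.Icc 1 d) (hl : l ∈ Finset.Icc 1 d)
    (hijk : q i k < q j k) (hjil : q j l < q i l) : ¬ UpgradePricing d n q := by
  intro h
  rcases h i hi j hj with hle | hle
  · exact (hle l hl).not_gt hjil
  · exact (hle k hk).not_gt hijk

lemma upgradePricing_of_monotone {d n : ℕ} {q : ℕ → ℕ → ℝ}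
    (hq : ∀ a b, a ≤ b → b ≤ n → ∀ k ∈ Finset.Icc 1 d, q a k ≤ q b k) :
    UpgradePricing d n q := by
  intro i hi j hj
  rcases le_total i j with hij | hji
  · exact Or.inl (hq i j hij (Finset.mem_Icc.1 hj).2)
  · exact Or.inr (hq j i hji (Finset.mem_Icc.1 hi).2)

lemma qex_mono {a b : ℕ} (hab : a ≤ b) (hb : b ≤ 4) {k : ℕ} (hk : k ∈ Finset.Icc 1 2) :
    qex a k ≤ qex b k := by
  obtain ⟨hk1, hk2⟩ := Finset.mem_Icc.1 hk
  interval_cases b <;> interval_cases a <;> interval_cases k <;> norm_num [qex]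

lemma isMechanism_qex_tex : IsMechanism 2 4 qex tex := by
  refine ⟨fun k _ ↦ by simp [qex], by simp [tex], fun i hi k hk ↦ ?_⟩
  obtain ⟨hi1, hi2⟩ := Finset.mem_Icc.1 hi
  obtain ⟨hk1, hk2⟩ := Finset.mem_Icc.1 hk
  interval_cases i <;> interval_cases k <;> norm_num [qex]

lemma icir_qex_tex : ICIR 2 4 θex qex tex := by
  intro j hj i hi
  obtain ⟨hj1, hj2⟩ := Finset.mem_Icc.1 hj
  obtain ⟨-, hi2⟩ := Finset.mem_Icc.1 hi
  interval_cases j <;> interval_cases i <;> norm_num [dot_two, qex, tex, θex]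

/-- Types 2 and 3 pin both prices at 2, and at these prices type 4, who values the first
good at 4 and the second at 1, would rather buy the first good alone. -/
lemma not_implementedBySeparatePrices_qex_tex (p : ℕ → ℝ) :
    ¬ ImplementedBySeparatePrices 2 4 θex qex tex p := by
  intro hp
  obtain ⟨ht2, -⟩ := hp 2 (by decide)
  obtain ⟨ht3, -⟩ := hp 3 (by decide)
  obtain ⟨-, hIC4⟩ := hp 4 (by decide)
  have hp2 : p 2 = 2 := by simpa [sum_Icc_one_two, tex, qex] using ht2.symm
  have hp1 : p 1 = 2 := by
    simp only [sum_Icc_one_two, tex, qex] at ht3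
    norm_num at ht3
    linarith
  have hfirst := hIC4 (fun k ↦ if k = 1 then 1 else 0) fun k _ ↦ by
    by_cases h : k = 1 <;> simp [h]
  norm_num [dot_two, sum_Icc_one_two, qex, θex, hp1, hp2] at hfirst

theorem counterexamples_without_monotonicity_general :
    (sepQ θex pex 2 1 = 0 ∧ sepQ θex pex 2 2 = 1 ∧
      sepQ θex pex 4 1 = 1 ∧ sepQ θex pex 4 2 = 0 ∧
      ¬ UpgradePricing 2 4 (sepQ θex pex)) ∧
    (IsMechanism 2 4 qex tex ∧ ICIR 2 4 θex qex tex ∧ UpgradePricing 2 4 qex ∧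
      ¬ ∃ p : ℕ → ℝ, ∀ i ∈ Finset.Icc 1 4,
          tex i = (∑ k ∈ Finset.Icc 1 2, p k * qex i k) ∧
          ∀ s : ℕ → ℝ, (∀ k ∈ Finset.Icc 1 2, s k = 0 ∨ s k = 1) →
            dot 2 s (θex i) - (∑ k ∈ Finset.Icc 1 2, p k * s k) ≤
              dot 2 (qex i) (θex i) - (∑ k ∈ Finset.Icc 1 2, p k * qex i k)) := by
  have h21 : sepQ θex pex 2 1 = 0 := by norm_num [sepQ, θex, pex]
  have h22 : sepQ θex pex 2 2 = 1 := by norm_num [sepQ, θex, pex]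
  have h41 : sepQ θex pex 4 1 = 1 := by norm_num [sepQ, θex, pex]
  have h42 : sepQ θex pex 4 2 = 0 := by norm_num [sepQ, θex, pex]
  refine ⟨⟨h21, h22, h41, h42, ?_⟩, isMechanism_qex_tex, icir_qex_tex,
    upgradePricing_of_monotone fun _ _ hab hb _ hk ↦ qex_mono hab hb hk,
    fun ⟨p, hp⟩ ↦ not_implementedBySeparatePrices_qex_tex p hp⟩
  exact not_upgradePricing_of_incomparable (i := 2) (j := 4) (k := 1) (l := 2)
    (by decide) (by decide) (by decide) (by decide) (by rw [h21, h41]; norm_num)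
    (by rw [h22, h42]; norm_num)

/-- **Theorem 3, counterexamples without monotonicity** (`d = 2`, `n = 4`):
(a) the separate pricing mechanism at `p = (2,2)` assigns the incomparable bundles
`q_2 = (0,1)` and `q_4 = (1,0)`, hence is not an upgrade pricing mechanism;
(b) the stated upgrade pricing mechanism is IC-IR, yet no vector of separate item prices
implements its outcome. -/
theorem counterexamples_without_monotonicity
    (f : ℕ → ℝ) (hf : IsProb 4 f) :
    (sepQ θex pex 2 1 = 0 ∧ sepQ θex pex 2 2 = 1 ∧
      sepQ θex pex 4 1 = 1 ∧ sepQ θex pex 4 2 = 0 ∧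
      ¬ UpgradePricing 2 4 (sepQ θex pex)) ∧
    (IsMechanism 2 4 qex tex ∧ ICIR 2 4 θex qex tex ∧ UpgradePricing 2 4 qex ∧
      ¬ ∃ p : ℕ → ℝ, ∀ i ∈ Finset.Icc 1 4,
          tex i = (∑ k ∈ Finset.Icc 1 2, p k * qex i k) ∧
          ∀ s : ℕ → ℝ, (∀ k ∈ Finset.Icc 1 2, s k = 0 ∨ s k = 1) →
            dot 2 s (θex i) - (∑ k ∈ Finset.Icc 1 2, p k * s k) ≤
              dot 2 (qex i) (θex i) - (∑ k ∈ Finset.Icc 1 2, p k * qex i k)) :=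
  counterexamples_without_monotonicity_general
end
end

section
/- Corollary 2 (optimality of separate monopoly pricing for monotone regular instances): Suppose the type space is monotone and the instance is regular with respect to cutoffs i^1, …, i^d ∈ {1,…,n}. Then the separate pricing mechanism at the price vector p with p_k = θ_{i^k}^k for each k is optimal. -/
open Finset

noncomputable section

/-! Myerson's argument, good by good. Summing downward local IC constraints and IR bounds each
type's utility from below, which bounds the revenue of every IC-IR mechanism by its virtual
welfare under the initial virtual values. Regularity makes the cutoff allocation
`q_i^k = 1 ⇔ i ≥ i^k` maximize that virtual welfare pointwise, and its value telescopes to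
`∑_k (1 − F_{i^k−1}) θ_{i^k}^k`. Under monotone types every type `i ≥ i^k` buys good `k` at price
`θ_{i^k}^k`, so separate pricing collects at least this much. -/

lemma Fc_succ (f : ℕ → ℝ) (i : ℕ) : Fc f (i + 1) = Fc f i + f (i + 1) :=
  sum_Icc_succ_top (Nat.le_add_left 1 i) f

lemma sum_Icc_eq_one_sub_Fc {n : ℕ} {f : ℕ → ℝ} (hsum : ∑ i ∈ Icc 1 n, f i = 1) {j : ℕ}
    (hj : j ≤ n) : ∑ i ∈ Icc (j + 1) n, f i = 1 - Fc f j := by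
  have h := sum_Ioc_consecutive f (Nat.zero_le j) hj
  simp only [← Icc_add_one_left_eq_Ioc, zero_add] at h
  rw [Fc]
  linarith

lemma dot_sub_right (d : ℕ) (x y z : ℕ → ℝ) : dot d x (y - z) = dot d x y - dot d x z := by
  simp only [dot, Pi.sub_apply, mul_sub, sum_sub_distrib]

lemma mul_le_ite_mul {x a : ℝ} (hx0 : 0 ≤ x) (hx1 : x ≤ 1) {P : Prop} [Decidable P]
    (hP : P → 0 ≤ a) (hnP : ¬P → a ≤ 0) : x * a ≤ (if P then 1 else 0) * a := by
  split_ifs with h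
  · nlinarith [hP h]
  · nlinarith [hnP h]

section Myerson

variable {d n : ℕ} {θ : ℕ → ℕ → ℝ} {f : ℕ → ℝ}

lemma ICIR.sum_le_utility {q : ℕ → ℕ → ℝ} {t : ℕ → ℝ} (hic : ICIR d n θ q t)
    (hmech : IsMechanism d n q t) {i : ℕ} (hi : 1 ≤ i) (hin : i ≤ n) :
    ∑ j ∈ Ico 1 i, dot d (q j) (θ (j + 1) - θ j) ≤ dot d (q i) (θ i) - t i := by
  induction i, hi using Nat.le_induction with
  | base =>
    have hIR := hic 1 (mem_Icc.mpr ⟨le_rfl, hin⟩) 0 (mem_Icc.mpr ⟨le_rfl, Nat.zero_le n⟩)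
    have hq0 : dot d (q 0) (θ 1) = 0 :=
      sum_eq_zero fun k hk => by rw [hmech.1 k hk, zero_mul]
    rw [Ico_self, sum_empty]
    linarith [hmech.2.1]
  | succ i hi ih =>
    have hIC := hic (i + 1) (mem_Icc.mpr ⟨by omega, hin⟩) i (mem_Icc.mpr ⟨by omega, by omega⟩)
    rw [sum_Ico_succ_top hi, dot_sub_right]
    linarith [ih (by omega)]

lemma sum_mul_sum_Ico_eq (hsum : ∑ i ∈ Icc 1 n, f i = 1) (a : ℕ → ℝ) :
    ∑ i ∈ Icc 1 n, f i * ∑ j ∈ Ico 1 i, a j = ∑ j ∈ Icc 1 n, (1 - Fc f j) * a j := by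
  simp_rw [mul_sum]
  rw [sum_comm' (t' := Icc 1 n) (s' := fun j => Icc (j + 1) n)
    (fun i j => by simp only [mem_Icc, mem_Ico]; omega)]
  refine sum_congr rfl fun j hj => ?_
  rw [← sum_mul, sum_Icc_eq_one_sub_Fc hsum (mem_Icc.mp hj).2]

/-- At `i = n` the correction term vanishes because `F_n = 1`. -/
lemma mul_initVirt_eq (hf : IsProb n f) {i : ℕ} (hi : i ∈ Icc 1 n) (k : ℕ) :
    f i * initVirt n θ f i k = f i * θ i k - (1 - Fc f i) * (θ (i + 1) k - θ i k) := by
  by_cases hin : i < n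
  · have hfi : f i ≠ 0 := (hf.1 i hi).ne'
    simp only [initVirt, if_pos hin]
    field_simp
  · have hFn : Fc f i = 1 := by
      rw [show i = n by have := (mem_Icc.mp hi).2; omega]
      exact hf.2
    simp [initVirt, hin, hFn]

lemma vw_initVirt_eq (hf : IsProb n f) (q : ℕ → ℕ → ℝ) :
    vw d n f (initVirt n θ f) q = ∑ i ∈ Icc 1 n, f i * dot d (q i) (θ i)
      - ∑ i ∈ Icc 1 n, (1 - Fc f i) * dot d (q i) (θ (i + 1) - θ i) := by
  rw [vw, ← sum_sub_distrib]
  refine sum_congr rfl fun i hi => ?_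
  simp only [dot, mul_sum, ← sum_sub_distrib]
  refine sum_congr rfl fun k _ => ?_
  rw [mul_left_comm, mul_initVirt_eq hf hi, Pi.sub_apply]
  ring

theorem revenue_le_vw_initVirt (hf : IsProb n f) {q : ℕ → ℕ → ℝ} {t : ℕ → ℝ}
    (hmech : IsMechanism d n q t) (hic : ICIR d n θ q t) :
    revenue n f t ≤ vw d n f (initVirt n θ f) q := by
  rw [vw_initVirt_eq hf, ← sum_mul_sum_Ico_eq hf.2, revenue, ← sum_sub_distrib]
  refine sum_le_sum fun i hi => ?_
  have hu := hic.sum_le_utility hmech (mem_Icc.mp hi).1 (mem_Icc.mp hi).2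
  rw [← mul_sub]
  exact mul_le_mul_of_nonneg_left (by linarith) (hf.1 i hi).le

end Myerson

section Cutoff

variable {d n : ℕ} {θ : ℕ → ℕ → ℝ} {f : ℕ → ℝ} {cut : ℕ → ℕ}

theorem vw_le_vw_cutAlloc (hf : IsProb n f) (hcut : ∀ k ∈ Icc 1 d, cut k ∈ Icc 1 n)
    (hreg : Regular d n θ f cut) {q : ℕ → ℕ → ℝ} (hq : InUnitCube d n q) :
    vw d n f (initVirt n θ f) q ≤ vw d n f (initVirt n θ f) (cutAlloc cut) := by
  refine sum_le_sum fun i hi =>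
    mul_le_mul_of_nonneg_left (sum_le_sum fun k hk => ?_) (hf.1 i hi).le
  exact mul_le_ite_mul (hq i hi k hk).1 (hq i hi k hk).2
    (fun h => (hreg k hk _ (hcut k hk) i hi le_rfl h).2)
    (fun h => (hreg k hk i hi _ (hcut k hk) (by omega) le_rfl).1)

lemma sum_mul_cutAlloc (hcut : ∀ k ∈ Icc 1 d, 1 ≤ cut k) (w : ℕ → ℝ) (g : ℕ → ℕ → ℝ) :
    ∑ i ∈ Icc 1 n, w i * ∑ k ∈ Icc 1 d, cutAlloc cut i k * g i k
      = ∑ k ∈ Icc 1 d, ∑ i ∈ Icc (cut k) n, w i * g i k := by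
  simp_rw [mul_sum]
  rw [sum_comm]
  refine sum_congr rfl fun k hk => ?_
  simp only [cutAlloc, ite_mul, one_mul, zero_mul, mul_ite, mul_zero]
  rw [← sum_filter]
  congr 1
  ext i
  simp only [mem_filter, mem_Icc]
  have := hcut k hk
  omega

lemma sum_Icc_mul_initVirt (hf : IsProb n f) {c : ℕ} (hc : c ∈ Icc 1 n) (k : ℕ) :
    ∑ i ∈ Icc c n, f i * initVirt n θ f i k = (1 - Fc f (c - 1)) * θ c k := by
  set g : ℕ → ℝ := fun i => (1 - Fc f (i - 1)) * θ i k
  have hstep : ∀ i ∈ Icc c n, f i * initVirt n θ f i k = -(g (i + 1) - g i) := by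
    intro i hi
    have hi' : i ∈ Icc 1 n := mem_Icc.mpr ⟨by grind, (mem_Icc.mp hi).2⟩
    have hF : Fc f i = Fc f (i - 1) + f i := by
      obtain ⟨j, rfl⟩ : ∃ j, i = j + 1 := ⟨i - 1, by grind⟩
      exact Fc_succ f j
    simp only [g, mul_initVirt_eq hf hi', Nat.add_sub_cancel, hF]
    ring
  have hg : g (n + 1) = 0 := by
    simp only [g, Nat.add_sub_cancel, show Fc f n = 1 from hf.2, sub_self, zero_mul]
  rw [sum_congr rfl hstep, sum_neg_distrib, sum_Icc_sub (mem_Icc.mp hc).2, hg]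
  simp [g]

theorem vw_cutAlloc_eq (hf : IsProb n f) (hcut : ∀ k ∈ Icc 1 d, cut k ∈ Icc 1 n) :
    vw d n f (initVirt n θ f) (cutAlloc cut)
      = ∑ k ∈ Icc 1 d, (1 - Fc f (cut k - 1)) * θ (cut k) k := by
  rw [vw, sum_mul_cutAlloc fun k hk => (mem_Icc.mp (hcut k hk)).1]
  exact sum_congr rfl fun k hk => sum_Icc_mul_initVirt hf (hcut k hk) k

end Cutoff

section SeparatePricing

variable {d n : ℕ} {θ : ℕ → ℕ → ℝ} {p : ℕ → ℝ}

lemma sepQ_of_ne_zero {i : ℕ} (hi : i ≠ 0) (k : ℕ) :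
    sepQ θ p i k = if p k ≤ θ i k then 1 else 0 := by
  simp [sepQ, hi]

lemma sepQ_nonneg (i k : ℕ) : 0 ≤ sepQ θ p i k := by
  unfold sepQ; split_ifs <;> norm_num

lemma sepQ_le_one (i k : ℕ) : sepQ θ p i k ≤ 1 := by
  unfold sepQ; split_ifs <;> norm_num

theorem isMechanism_sep : IsMechanism d n (sepQ θ p) (sepT d θ p) :=
  ⟨fun _ _ => by simp [sepQ], by simp [sepT, sepQ],
    fun _ _ _ _ => ⟨sepQ_nonneg _ _, sepQ_le_one _ _⟩⟩

lemma dot_sepQ_sub_sepT (m j : ℕ) :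
    dot d (sepQ θ p m) (θ j) - sepT d θ p m = ∑ k ∈ Icc 1 d, sepQ θ p m k * (θ j k - p k) := by
  simp only [dot, sepT, ← sum_sub_distrib]
  exact sum_congr rfl fun k _ => by ring

theorem icir_sep : ICIR d n θ (sepQ θ p) (sepT d θ p) := by
  intro j hj m _
  have hj0 : j ≠ 0 := by have := (mem_Icc.mp hj).1; omega
  rw [ge_iff_le, dot_sepQ_sub_sepT, dot_sepQ_sub_sepT]
  refine sum_le_sum fun k _ => ?_
  rw [sepQ_of_ne_zero hj0]
  exact mul_le_ite_mul (sepQ_nonneg m k) (sepQ_le_one m k) sub_nonneg.mpr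
    fun h => by linarith [not_le.mp h]

theorem sum_le_revenue_sep {f : ℕ → ℝ} (hf : IsProb n f) {cut : ℕ → ℕ}
    (hcut : ∀ k ∈ Icc 1 d, cut k ∈ Icc 1 n) (hp : ∀ k ∈ Icc 1 d, 0 ≤ p k)
    (hbuy : ∀ k ∈ Icc 1 d, ∀ i ∈ Icc 1 n, cut k ≤ i → p k ≤ θ i k) :
    ∑ k ∈ Icc 1 d, (1 - Fc f (cut k - 1)) * p k ≤ revenue n f (sepT d θ p) := by
  have hcut1 : ∀ k ∈ Icc 1 d, 1 ≤ cut k := fun k hk => (mem_Icc.mp (hcut k hk)).1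
  calc ∑ k ∈ Icc 1 d, (1 - Fc f (cut k - 1)) * p k
      = ∑ k ∈ Icc 1 d, ∑ i ∈ Icc (cut k) n, f i * p k := by
        refine sum_congr rfl fun k hk => ?_
        rw [← sum_mul, ← sum_Icc_eq_one_sub_Fc hf.2 (by grind), Nat.sub_add_cancel (hcut1 k hk)]
    _ = ∑ i ∈ Icc 1 n, f i * ∑ k ∈ Icc 1 d, cutAlloc cut i k * p k :=
        (sum_mul_cutAlloc hcut1 f fun _ k => p k).symm
    _ ≤ ∑ i ∈ Icc 1 n, f i * ∑ k ∈ Icc 1 d, p k * sepQ θ p i k := by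
        refine sum_le_sum fun i hi =>
          mul_le_mul_of_nonneg_left (sum_le_sum fun k hk => ?_) (hf.1 i hi).le
        rw [mul_comm]
        refine mul_le_mul_of_nonneg_left ?_ (hp k hk)
        by_cases h : cut k ≤ i
        · rw [cutAlloc, if_pos h, sepQ_of_ne_zero (by grind), if_pos (hbuy k hk i hi h)]
        · rw [cutAlloc, if_neg h]
          exact sepQ_nonneg i k

end SeparatePricing

theorem separate_optimal_monotone_regular_general
    (d n : ℕ)
    (θ : ℕ → ℕ → ℝ) (hθ : ∀ i ∈ Finset.Icc 1 n, ∀ k ∈ Finset.Icc 1 d, 0 ≤ θ i k)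
    (f : ℕ → ℝ) (hf : IsProb n f)
    (hmono : MonotoneTypes d n θ)
    (cut : ℕ → ℕ) (hcut : ∀ k ∈ Finset.Icc 1 d, cut k ∈ Finset.Icc 1 n)
    (hreg : Regular d n θ f cut) :
    Optimal d n θ f (sepQ θ (fun k => θ (cut k) k)) (sepT d θ (fun k => θ (cut k) k)) := by
  refine ⟨isMechanism_sep, icir_sep, fun q t hmech hic => ?_⟩
  calc revenue n f t
      ≤ vw d n f (initVirt n θ f) q := revenue_le_vw_initVirt hf hmech hic
    _ ≤ vw d n f (initVirt n θ f) (cutAlloc cut) := vw_le_vw_cutAlloc hf hcut hreg hmech.2.2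
    _ = ∑ k ∈ Icc 1 d, (1 - Fc f (cut k - 1)) * θ (cut k) k := vw_cutAlloc_eq hf hcut
    _ ≤ _ := sum_le_revenue_sep hf hcut (fun k hk => hθ _ (hcut k hk) k hk)
          fun k hk i hi hle => hmono _ (hcut k hk) i hi hle k hk

/-- **Corollary 2 (optimality of separate monopoly pricing for monotone regular
instances)**: if the type space is monotone and the instance is regular w.r.t. cutoffs
`i^1,…,i^d`, then the separate pricing mechanism at prices `p_k = θ_{i^k}^k` is optimal. -/
theorem separate_optimal_monotone_regular
    (d n : ℕ) (hd : 1 ≤ d) (hn : 1 ≤ n)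
    (θ : ℕ → ℕ → ℝ) (hθ : ∀ i ∈ Finset.Icc 1 n, ∀ k ∈ Finset.Icc 1 d, 0 ≤ θ i k)
    (f : ℕ → ℝ) (hf : IsProb n f)
    (hmono : MonotoneTypes d n θ)
    (cut : ℕ → ℕ) (hcut : ∀ k ∈ Finset.Icc 1 d, cut k ∈ Finset.Icc 1 n)
    (hreg : Regular d n θ f cut) :
    Optimal d n θ f (sepQ θ (fun k => θ (cut k) k)) (sepT d θ (fun k => θ (cut k) k)) :=
  separate_optimal_monotone_regular_general d n θ hθ f hf hmono cut hcut hreg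
end
end
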